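/- An R-submodule W of 𝒟 is L_d^1-admissible if and only if it is G_d-admissible. In particular, for τ = 1, condition (3) of L_d^1-admissibility (W_n ∩ V_n^i ⊆ W_{n−e_i}) is equivalent, given conditions (1) and (2), to the G_d condition ann_R⟨H_{n−e_i}⟩ ∘ H_n = ⟨H_{n−(n_i−1)e_i}⟩ for all i and n − e_i > 0. -/

import Mathlib

open MvPolynomial
open scoped Classical

noncomputable section

variable {m : ℕ} {K : Type*} [Field K]

/-- The divided power module `𝒟 = K_DP[X₁,…,X_m]`, realized as finitely supported
coefficient functions on monomials in the dual variables. -/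
abbrev DP (m : ℕ) (K : Type*) [Field K] : Type _ := (Fin m →₀ ℕ) →₀ K

/-- Contraction action of a polynomial on the divided power module:
`x^a ∘ X^b = X^(b-a)` if `a ≤ b` componentwise, and `0` otherwise. -/
def contract (f : MvPolynomial (Fin m) K) (F : DP m K) : DP m K :=
  ∑ a ∈ f.support, F.sum fun b x =>
    if a ≤ b then Finsupp.single (b - a) (MvPolynomial.coeff a f * x) else 0

/-- Total degree of a monomial exponent. -/
def mdeg (b : Fin m →₀ ℕ) : ℕ := b.sum fun _ e => e

/-- Degree of an element of the divided power module. -/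
def DPdeg (F : DP m K) : ℕ := F.support.sup mdeg

/-- Top degree form of an element of the divided power module. -/
def topForm (F : DP m K) : DP m K := F.filter fun b => mdeg b = DPdeg F

/-- A subset of `𝒟` which is an `R`-submodule under the contraction action. -/
def IsDPSubmodule (W : Set (DP m K)) : Prop :=
  (0 : DP m K) ∈ W ∧ (∀ F G, F ∈ W → G ∈ W → F + G ∈ W) ∧
    (∀ (c : K), ∀ F, F ∈ W → c • F ∈ W) ∧
    (∀ (f : MvPolynomial (Fin m) K), ∀ F, F ∈ W → contract f F ∈ W)

/-- The `R`-submodule of `𝒟` generated by a set. -/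
def DPspan (S : Set (DP m K)) : Set (DP m K) := ⋂₀ {W | IsDPSubmodule W ∧ S ⊆ W}

/-- The annihilator of a subset of `𝒟` in `R`. -/
def DPann (W : Set (DP m K)) : Set (MvPolynomial (Fin m) K) :=
  {f | ∀ F ∈ W, contract f F = 0}

/-- `n ∈ ℕ₊^d`. -/
def Pos {d : ℕ} (n : Fin d → ℕ) : Prop := ∀ i, 1 ≤ n i

/-- `n - eᵢ`. -/
def decE {d : ℕ} (n : Fin d → ℕ) (i : Fin d) : Fin d → ℕ :=
  Function.update n i (n i - 1)

/-- The common degree `s_n` of the generators `H n j`. -/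
def sdeg {m d τ : ℕ} {K : Type*} [Field K]
    (H : (Fin d → ℕ) → Fin τ → DP m K) (n : Fin d → ℕ) : ℕ :=
  Finset.univ.sup fun j => DPdeg (H n j)

/-- The submodule `W_n = ⟨H_n^j : j = 1,…,τ⟩` of `𝒟`. -/
def Wn {m d τ : ℕ} {K : Type*} [Field K]
    (H : (Fin d → ℕ) → Fin τ → DP m K) (n : Fin d → ℕ) : Set (DP m K) :=
  DPspan (Set.range (H n))

/-- `V_n^i`: the `K`-span of the dual monomials `Z₁^{k₁}⋯Z_m^{k_m}` with
`k_i ≤ n_i − 2` and `|k| ≤ s`. -/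
def Vni {m d : ℕ} {K : Type*} [Field K] (hdm : d ≤ m) (s : ℕ) (n : Fin d → ℕ)
    (i : Fin d) : Set (DP m K) :=
  {F | ∀ b ∈ F.support, b (Fin.castLE hdm i) ≤ n i - 2 ∧ mdeg b ≤ s}

/-- Condition (1) of `L_d^τ`-admissibility: for each `n`, the generators `H_n^j` have a
common degree `s_n` and their forms of degree `s_n` are linearly independent. -/
def Cond1 {m d τ : ℕ} {K : Type*} [Field K]
    (H : (Fin d → ℕ) → Fin τ → DP m K) : Prop :=
  ∀ n, Pos n → (∀ j, DPdeg (H n j) = sdeg H n) ∧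
    LinearIndependent K fun j => topForm (H n j)

/-- Condition (2) of `L_d^τ`-admissibility with respect to the sequence
`z_i = x_i`, `i = 1,…,d` (after a change of coordinates the general elements, resp.
the regular linear sequence, may be taken to be the first `d` variables, with
`𝒟 = K_DP[Z₁,…,Z_m]` in the dual coordinates):
`z_i ∘ H_n^j = H_{n−e_i}^j` if `n − e_i > 0`, and `0` otherwise. -/
def Cond2 {m d τ : ℕ} {K : Type*} [Field K] (hdm : d ≤ m)
    (H : (Fin d → ℕ) → Fin τ → DP m K) : Prop :=
  ∀ n, Pos n → ∀ (i : Fin d) (j : Fin τ),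
    contract (MvPolynomial.X (Fin.castLE hdm i)) (H n j) =
      if 2 ≤ n i then H (decE n i) j else 0

/-- Condition (3) of `L_d^τ`-admissibility: `W_n ∩ V_n^i ⊆ W_{n−e_i}`. -/
def Cond3 {m d τ : ℕ} {K : Type*} [Field K] (hdm : d ≤ m)
    (H : (Fin d → ℕ) → Fin τ → DP m K) : Prop :=
  ∀ n, Pos n → ∀ i : Fin d, 2 ≤ n i →
    Wn H n ∩ Vni hdm (sdeg H n) n i ⊆ Wn H (decE n i)

/-- The generating set `{H_n^j : j = 1,…,τ, n ∈ ℕ₊^d}`. -/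
def genSet {m d τ : ℕ} {K : Type*} [Field K]
    (H : (Fin d → ℕ) → Fin τ → DP m K) : Set (DP m K) :=
  {F | ∃ n j, Pos n ∧ F = H n j}

/-- The family `H` is an `L_d^τ`-admissible system of generators. -/
def IsLdAdmissibleSystem {m d τ : ℕ} {K : Type*} [Field K] (hdm : d ≤ m)
    (H : (Fin d → ℕ) → Fin τ → DP m K) : Prop :=
  Cond1 H ∧ Cond2 hdm H ∧ Cond3 hdm H

/-- The Gorenstein (`G_d`-admissibility) condition (b) of Elias–Rossi, for a family
`H' : ℕ₊^d → 𝒟`:  `ann_R⟨H_{n−e_i}⟩ ∘ H_n = ⟨H_{n−(n_i−1)e_i}⟩`. -/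
def CondB {m d : ℕ} {K : Type*} [Field K] (hdm : d ≤ m)
    (H' : (Fin d → ℕ) → DP m K) : Prop :=
  ∀ n, Pos n → ∀ i : Fin d, 2 ≤ n i →
    DPspan {G | ∃ f ∈ DPann (DPspan {H' (decE n i)}), G = contract f (H' n)} =
      DPspan {H' (Function.update n i 1)}

/-! Given (2), both conditions are equivalent to `KerCond`: every element of `⟨H_n⟩` killed by
`z_i` lies in `⟨H_{n-(n_i-1)e_i}⟩ = ⟨z_i^{n_i-1} ∘ H_n⟩`. For (b) this is immediate, because
`H_{n-e_i} = z_i ∘ H_n` makes `ann⟨H_{n-e_i}⟩ ∘ H_n` exactly that kernel. An element killed by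
`z_i` lies in `V_n^i`, so (3) moves it from `⟨H_n⟩` into `⟨H_{n-e_i}⟩`; iterating until
`n_i = 2` gives `KerCond`. Conversely, membership in `V_n^i` means `z_i^k ∘ F = 0` with
`k = n_i - 1`; then `KerCond` writes `z_i^{k-1} ∘ F` as `g z_i^{n_i-1} ∘ H_n`, and subtracting
`g z_i^{n_i-k} ∘ H_n ∈ ⟨z_i ∘ H_n⟩` from `F` lowers `k`. -/

theorem contract_apply (f : MvPolynomial (Fin m) K) (F : DP m K) (p : Fin m →₀ ℕ) :
    contract f F p = ∑ a ∈ f.support, coeff a f * F (p + a) := by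
  simp only [contract, Finsupp.finsetSum_apply, Finsupp.sum_apply]
  refine Finset.sum_congr rfl fun a _ => ?_
  rw [Finsupp.sum, Finset.sum_eq_single (p + a)]
  · simp
  · intro b _ hb
    split_ifs with hab
    · exact Finsupp.single_eq_of_ne (fun h => hb (by rw [h, tsub_add_cancel_of_le hab]))
    · rfl
  · intro h
    rw [Finsupp.notMem_support_iff.mp h]
    simp

theorem contract_apply_of_support_subset {f : MvPolynomial (Fin m) K}
    {s : Finset (Fin m →₀ ℕ)} (hs : f.support ⊆ s) (F : DP m K) (p : Fin m →₀ ℕ) :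
    contract f F p = ∑ a ∈ s, coeff a f * F (p + a) := by
  rw [contract_apply]
  exact Finset.sum_subset hs fun a _ ha => by rw [notMem_support_iff.mp ha, zero_mul]

theorem contract_monomial_apply (a : Fin m →₀ ℕ) (c : K) (F : DP m K) (p : Fin m →₀ ℕ) :
    contract (monomial a c) F p = c * F (p + a) := by
  rw [contract_apply_of_support_subset support_monomial_subset, Finset.sum_singleton,
    coeff_monomial, if_pos rfl]

theorem contract_zero_left (F : DP m K) : contract 0 F = 0 := by
  ext p
  simp [contract_apply]

theorem contract_add_left (f g : MvPolynomial (Fin m) K) (F : DP m K) :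
    contract (f + g) F = contract f F + contract g F := by
  ext p
  rw [Finsupp.add_apply, contract_apply_of_support_subset support_add,
    contract_apply_of_support_subset Finset.subset_union_left,
    contract_apply_of_support_subset Finset.subset_union_right, ← Finset.sum_add_distrib]
  simp only [coeff_add, add_mul]

theorem contract_sub_left (f g : MvPolynomial (Fin m) K) (F : DP m K) :
    contract (f - g) F = contract f F - contract g F := by
  ext p
  rw [Finsupp.sub_apply, contract_apply_of_support_subset (support_sub _ f g),
    contract_apply_of_support_subset Finset.subset_union_left,
    contract_apply_of_support_subset Finset.subset_union_right, ← Finset.sum_sub_distrib]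
  simp only [coeff_sub, sub_mul]

theorem contract_zero_right (f : MvPolynomial (Fin m) K) : contract f (0 : DP m K) = 0 := by
  ext p
  simp [contract_apply]

theorem contract_add_right (f : MvPolynomial (Fin m) K) (F G : DP m K) :
    contract f (F + G) = contract f F + contract f G := by
  ext p
  simp only [contract_apply, Finsupp.add_apply, mul_add, Finset.sum_add_distrib]

theorem contract_one (F : DP m K) : contract 1 F = F := by
  ext p
  rw [← C_1, C_apply, contract_monomial_apply, one_mul, add_zero]

theorem contract_C (c : K) (F : DP m K) : contract (C c) F = c • F := by
  ext p
  rw [C_apply, contract_monomial_apply, add_zero, Finsupp.smul_apply, smul_eq_mul]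

theorem contract_mul (f g : MvPolynomial (Fin m) K) (F : DP m K) :
    contract (f * g) F = contract f (contract g F) := by
  induction f using MvPolynomial.induction_on' with
  | add p q hp hq => rw [add_mul, contract_add_left, contract_add_left, hp, hq]
  | monomial a c =>
    induction g using MvPolynomial.induction_on' with
    | add p q hp hq =>
      rw [mul_add, contract_add_left, hp, hq, contract_add_left, contract_add_right]
    | monomial b x =>
      ext p
      rw [monomial_mul, contract_monomial_apply, contract_monomial_apply,
        contract_monomial_apply, mul_assoc, add_assoc]

theorem contract_comm (f g : MvPolynomial (Fin m) K) (F : DP m K) :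
    contract f (contract g F) = contract g (contract f F) := by
  rw [← contract_mul, mul_comm, contract_mul]

theorem contract_X_pow_eq_zero_iff {j : Fin m} {k : ℕ} {F : DP m K} :
    contract (X j ^ k) F = 0 ↔ ∀ b ∈ F.support, b j < k := by
  simp only [X_pow_eq_monomial, Finsupp.ext_iff, contract_monomial_apply, one_mul,
    Finsupp.coe_zero, Pi.zero_apply, Finsupp.mem_support_iff]
  constructor
  · intro h b hb
    by_contra! hkb
    exact hb (by rw [← tsub_add_cancel_of_le (Finsupp.single_le_iff.mpr hkb), h])
  · intro h p
    by_contra hp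
    have := h _ hp
    simp at this

theorem mdeg_add (p a : Fin m →₀ ℕ) : mdeg (p + a) = mdeg p + mdeg a :=
  Finsupp.sum_add_index' (fun _ => rfl) fun _ _ _ => rfl

theorem mdeg_le_DPdeg_of_mem_support_contract {f : MvPolynomial (Fin m) K} {F : DP m K}
    {p : Fin m →₀ ℕ} (hp : p ∈ (contract f F).support) : mdeg p ≤ DPdeg F := by
  rw [Finsupp.mem_support_iff, contract_apply] at hp
  obtain ⟨a, -, ha⟩ := Finset.exists_ne_zero_of_sum_ne_zero hp
  have hpa : p + a ∈ F.support := Finsupp.mem_support_iff.mpr (right_ne_zero_of_mul ha)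
  calc mdeg p ≤ mdeg (p + a) := by rw [mdeg_add]; exact Nat.le_add_right _ _
    _ ≤ DPdeg F := Finset.le_sup hpa

theorem isDPSubmodule_range_contract (G : DP m K) :
    IsDPSubmodule (Set.range fun f => contract f G) := by
  refine ⟨⟨0, contract_zero_left G⟩, ?_, ?_, ?_⟩
  · rintro _ _ ⟨f, rfl⟩ ⟨g, rfl⟩
    exact ⟨f + g, contract_add_left f g G⟩
  · rintro c _ ⟨f, rfl⟩
    exact ⟨C c * f, by simp only [contract_mul, contract_C]⟩
  · rintro g _ ⟨f, rfl⟩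
    exact ⟨g * f, contract_mul g f G⟩

theorem subset_DPspan (S : Set (DP m K)) : S ⊆ DPspan S :=
  fun _ hx _ hW => hW.2 hx

theorem DPspan_subset {S W : Set (DP m K)} (hW : IsDPSubmodule W) (hSW : S ⊆ W) :
    DPspan S ⊆ W :=
  Set.sInter_subset_of_mem ⟨hW, hSW⟩

theorem DPspan_singleton (G : DP m K) : DPspan {G} = Set.range fun f => contract f G := by
  refine (DPspan_subset (isDPSubmodule_range_contract G) ?_).antisymm ?_
  · exact Set.singleton_subset_iff.mpr ⟨1, contract_one G⟩
  · rintro _ ⟨f, rfl⟩ W hW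
    exact hW.1.2.2.2 f G (hW.2 rfl)

theorem mem_DPspan_singleton {F G : DP m K} : F ∈ DPspan {G} ↔ ∃ f, contract f G = F := by
  rw [DPspan_singleton, Set.mem_range]

theorem contract_mem_DPspan_singleton (f : MvPolynomial (Fin m) K) (G : DP m K) :
    contract f G ∈ DPspan {G} :=
  mem_DPspan_singleton.mpr ⟨f, rfl⟩

theorem mem_DPann_DPspan_singleton {f : MvPolynomial (Fin m) K} {G : DP m K} :
    f ∈ DPann (DPspan {G}) ↔ contract f G = 0 := by
  refine ⟨fun h => h G (subset_DPspan _ rfl), fun h F hF => ?_⟩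
  obtain ⟨g, rfl⟩ := mem_DPspan_singleton.mp hF
  rw [contract_comm, h, contract_zero_right]

theorem mdeg_le_DPdeg_of_mem_DPspan_singleton {F G : DP m K} (hF : F ∈ DPspan {G})
    {b : Fin m →₀ ℕ} (hb : b ∈ F.support) : mdeg b ≤ DPdeg G := by
  obtain ⟨f, rfl⟩ := mem_DPspan_singleton.mp hF
  exact mdeg_le_DPdeg_of_mem_support_contract hb

section Kernel

variable {x : MvPolynomial (Fin m) K} {G : DP m K} {e : ℕ}

theorem mem_DPspan_contract_of_contract_pow_eq_zero
    (hker : ∀ F ∈ DPspan {G}, contract x F = 0 → F ∈ DPspan {contract (x ^ e) G})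
    {k : ℕ} (hk : k ≤ e) {F : DP m K} (hF : F ∈ DPspan {G}) (hxF : contract (x ^ k) F = 0) :
    F ∈ DPspan {contract x G} := by
  induction k generalizing F with
  | zero =>
    rw [pow_zero, contract_one] at hxF
    exact mem_DPspan_singleton.mpr ⟨0, hxF ▸ contract_zero_left _⟩
  | succ k ih =>
    obtain ⟨f, rfl⟩ := mem_DPspan_singleton.mp hF
    obtain ⟨g, hg⟩ : ∃ g, contract g (contract (x ^ e) G) = contract (x ^ k) (contract f G) := by
      refine mem_DPspan_singleton.mp (hker _ ?_ ?_)
      · rw [← contract_mul]; exact contract_mem_DPspan_singleton _ G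
      · rw [← contract_mul, ← pow_succ', hxF]
    have hpow : x ^ k * (f - g * x ^ (e - k)) = x ^ k * f - g * x ^ e := by
      rw [mul_sub, ← Nat.add_sub_cancel' (by omega : k ≤ e), pow_add, Nat.add_sub_cancel_left]
      ring
    obtain ⟨h, hh⟩ := mem_DPspan_singleton.mp <|
      ih (by omega) (contract_mem_DPspan_singleton (f - g * x ^ (e - k)) G) <| by
        rw [← contract_mul, hpow, contract_sub_left, contract_mul, contract_mul g, hg, sub_self]
    refine mem_DPspan_singleton.mpr ⟨h + g * x ^ (e - k - 1), ?_⟩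
    rw [contract_add_left, hh, ← contract_mul, mul_assoc, ← pow_succ,
      Nat.sub_add_cancel (by omega : 1 ≤ e - k), ← contract_add_left, sub_add_cancel]

theorem DPspan_contract_DPann_eq_iff (hx : contract (x ^ (e + 1)) G = 0) :
    DPspan {F | ∃ f ∈ DPann (DPspan {contract x G}), F = contract f G} =
        DPspan {contract (x ^ e) G} ↔
      ∀ F ∈ DPspan {G}, contract x F = 0 → F ∈ DPspan {contract (x ^ e) G} := by
  have hS : {F | ∃ f ∈ DPann (DPspan {contract x G}), F = contract f G} =
      {F | F ∈ DPspan {G} ∧ contract x F = 0} := by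
    ext F
    simp only [Set.mem_ofPred_eq, mem_DPann_DPspan_singleton, mem_DPspan_singleton]
    constructor
    · rintro ⟨f, hf, rfl⟩
      exact ⟨⟨f, rfl⟩, by rw [contract_comm, hf]⟩
    · rintro ⟨⟨f, rfl⟩, hf⟩
      exact ⟨f, by rw [contract_comm, hf], rfl⟩
  rw [hS]
  refine ⟨fun h F hF hxF => h ▸ subset_DPspan _ ⟨hF, hxF⟩, fun h => ?_⟩
  refine (DPspan_subset ?_ fun F hF => h F hF.1 hF.2).antisymm ?_
  · rw [DPspan_singleton]
    exact isDPSubmodule_range_contract _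
  · rw [DPspan_singleton]
    rintro _ ⟨f, rfl⟩
    refine subset_DPspan _ ⟨?_, ?_⟩
    · show contract f (contract (x ^ e) G) ∈ DPspan {G}
      rw [← contract_mul]
      exact contract_mem_DPspan_singleton _ G
    · rw [contract_comm, ← contract_mul x, ← pow_succ', hx, contract_zero_right]

end Kernel

section Family

variable {d : ℕ} {hdm : d ≤ m} {H' : (Fin d → ℕ) → DP m K}

theorem Pos.update {n : Fin d → ℕ} (hn : Pos n) (i : Fin d) {c : ℕ} (hc : 1 ≤ c) :
    Pos (Function.update n i c) := by
  intro j
  rcases eq_or_ne j i with rfl | hji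
  · rwa [Function.update_self]
  · rw [Function.update_of_ne hji]
    exact hn j

theorem Wn_const (n : Fin d → ℕ) : Wn (fun n (_ : Fin 1) => H' n) n = DPspan {H' n} := by
  rw [Wn, Set.range_const]

theorem sdeg_const (n : Fin d → ℕ) : sdeg (fun n (_ : Fin 1) => H' n) n = DPdeg (H' n) :=
  Finset.sup_const Finset.univ_nonempty _

theorem contract_X_pow_of_lt (h2 : Cond2 hdm fun n (_ : Fin 1) => H' n) {n : Fin d → ℕ}
    (hn : Pos n) {i : Fin d} {k : ℕ} (hk : k < n i) :
    contract (X (Fin.castLE hdm i) ^ k) (H' n) = H' (Function.update n i (n i - k)) := by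
  induction k with
  | zero => rw [pow_zero, contract_one, Nat.sub_zero, Function.update_eq_self]
  | succ k ih =>
    rw [pow_succ', contract_mul, ih (by omega), h2 _ (hn.update i (by omega)) i 0,
      Function.update_self, if_pos (by omega), decE, Function.update_idem,
      Function.update_self, Nat.sub_sub]

theorem contract_X_pow_self_eq_zero (h2 : Cond2 hdm fun n (_ : Fin 1) => H' n)
    {n : Fin d → ℕ} (hn : Pos n) (i : Fin d) :
    contract (X (Fin.castLE hdm i) ^ n i) (H' n) = 0 := by
  obtain ⟨e, he⟩ : ∃ e, n i = e + 1 := ⟨n i - 1, by have := hn i; omega⟩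
  rw [he, pow_succ', contract_mul, contract_X_pow_of_lt h2 hn (by omega),
    h2 _ (hn.update i (by omega)) i 0, Function.update_self, if_neg (by omega)]

theorem H_decE_eq_contract_X (h2 : Cond2 hdm fun n (_ : Fin 1) => H' n) {n : Fin d → ℕ}
    (hn : Pos n) {i : Fin d} (hi : 2 ≤ n i) :
    H' (decE n i) = contract (X (Fin.castLE hdm i)) (H' n) := by
  rw [← pow_one (X _), contract_X_pow_of_lt h2 hn (by omega), decE]

theorem H_update_one_eq_contract_X_pow (h2 : Cond2 hdm fun n (_ : Fin 1) => H' n)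
    {n : Fin d → ℕ} (hn : Pos n) (i : Fin d) :
    H' (Function.update n i 1) = contract (X (Fin.castLE hdm i) ^ (n i - 1)) (H' n) := by
  have := hn i
  rw [contract_X_pow_of_lt h2 hn (by omega), Nat.sub_sub_self this]

variable (hdm H') in
def KerCond : Prop :=
  ∀ n, Pos n → ∀ i : Fin d, 2 ≤ n i → ∀ F ∈ DPspan {H' n},
    contract (X (Fin.castLE hdm i)) F = 0 → F ∈ DPspan {H' (Function.update n i 1)}

theorem kerCond_of_cond3 (h3 : Cond3 hdm fun n (_ : Fin 1) => H' n) : KerCond hdm H' := by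
  have hstep : ∀ n, Pos n → ∀ i, 2 ≤ n i → ∀ F ∈ DPspan {H' n},
      contract (X (Fin.castLE hdm i)) F = 0 → F ∈ DPspan {H' (decE n i)} := by
    intro n hn i hi F hF hxF
    have h := h3 n hn i hi
    rw [Wn_const, Wn_const, sdeg_const] at h
    refine h ⟨hF, fun b hb => ⟨?_, mdeg_le_DPdeg_of_mem_DPspan_singleton hF hb⟩⟩
    have := contract_X_pow_eq_zero_iff.mp (by rwa [pow_one]) b hb
    omega
  suffices ∀ k n, Pos n → ∀ i, n i = k + 2 → ∀ F ∈ DPspan {H' n},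
      contract (X (Fin.castLE hdm i)) F = 0 → F ∈ DPspan {H' (Function.update n i 1)} from
    fun n hn i hi => this (n i - 2) n hn i (by omega)
  intro k
  induction k with
  | zero =>
    intro n hn i hk F hF hxF
    have := hstep n hn i (by omega) F hF hxF
    rwa [decE, hk] at this
  | succ k ih =>
    intro n hn i hk F hF hxF
    have := ih (decE n i) (hn.update i (by omega)) i (by rw [decE, Function.update_self]; omega)
      F (hstep n hn i (by omega) F hF hxF) hxF
    rwa [decE, Function.update_idem] at this

theorem cond3_of_kerCond (h2 : Cond2 hdm fun n (_ : Fin 1) => H' n) (hK : KerCond hdm H') :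
    Cond3 hdm fun n (_ : Fin 1) => H' n := by
  rintro n hn i hi F ⟨hF, hFV⟩
  rw [Wn_const] at hF ⊢
  rw [H_decE_eq_contract_X h2 hn hi]
  refine mem_DPspan_contract_of_contract_pow_eq_zero
    (H_update_one_eq_contract_X_pow h2 hn i ▸ hK n hn i hi) le_rfl hF ?_
  rw [contract_X_pow_eq_zero_iff]
  intro b hb
  have := (hFV b hb).1
  omega

theorem condB_iff_kerCond (h2 : Cond2 hdm fun n (_ : Fin 1) => H' n) :
    CondB hdm H' ↔ KerCond hdm H' := by
  refine forall₂_congr fun n hn => forall₂_congr fun i hi => ?_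
  rw [H_decE_eq_contract_X h2 hn hi, H_update_one_eq_contract_X_pow h2 hn i]
  refine DPspan_contract_DPann_eq_iff ?_
  rw [Nat.sub_add_cancel (hn i)]
  exact contract_X_pow_self_eq_zero h2 hn i

end Family

theorem L1_admissible_iff_Gd_admissible_general {m d : ℕ} {K : Type*} [Field K]
    (hdm : d ≤ m) (H' : (Fin d → ℕ) → DP m K)
    (h2 : Cond2 hdm (fun n (_ : Fin 1) => H' n)) :
    Cond3 hdm (fun n (_ : Fin 1) => H' n) ↔ CondB hdm H' := by
  rw [condB_iff_kerCond h2]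
  exact ⟨kerCond_of_cond3, cond3_of_kerCond h2⟩

/-- Discussion 4.10. An `R`-submodule `W` of `𝒟` is
`L_d^1`-admissible if and only if it is `G_d`-admissible: for `τ = 1`, given
conditions (1) (which for `τ = 1` just says each `H_n` is nonzero) and (2),
condition (3) of `L_d^1`-admissibility is equivalent to the `G_d` condition
`ann_R⟨H_{n−e_i}⟩ ∘ H_n = ⟨H_{n−(n_i−1)e_i}⟩` for all `i` and `n − e_i > 0`. -/
theorem L1_admissible_iff_Gd_admissible {m d : ℕ} {K : Type*} [Field K]
    (hdm : d ≤ m) (H' : (Fin d → ℕ) → DP m K)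
    (h1 : Cond1 (fun n (_ : Fin 1) => H' n))
    (h2 : Cond2 hdm (fun n (_ : Fin 1) => H' n)) :
    Cond3 hdm (fun n (_ : Fin 1) => H' n) ↔ CondB hdm H' :=
  L1_admissible_iff_Gd_admissible_general hdm H' h2
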